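/- arXiv:1611.04130 — 2 statements merged into one kernel-verified Lean document; each statement's English description precedes it below -/
import Mathlib

section
/- Let H be a complex Hilbert space and let p, q : H → H be bounded linear projections (self-adjoint idempotents) with operator norm ‖p − q‖ < 1. Then the ranges of p and q are isomorphic as ℂ-vector spaces; in particular, Module.rank ℂ (range p) = Module.rank ℂ (range q). -/
/-- Key injectivity step: if `‖p - q‖ < 1`, then `q` is injective on `range p`. -/
lemma aux_inj_on_range
    {H : Type*} [NormedAddCommGroup H] [InnerProductSpace ℂ H]
    (p q : H →L[ℂ] H) (hp_idem : p * p = p) (hpq : ‖p - q‖ < 1) :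
    Function.Injective fun x : LinearMap.range (p : H →ₗ[ℂ] H) =>
      (⟨q x, LinearMap.mem_range.2 ⟨(x : H), rfl⟩⟩ :
        LinearMap.range (q : H →ₗ[ℂ] H)) := by
  intro x y hxy
  have hsub : q (x : H) = q (y : H) := congrArg Subtype.val hxy
  -- reduce to kernel
  have key : ∀ z : H, z ∈ LinearMap.range (p : H →ₗ[ℂ] H) → q z = 0 → z = 0 := by
    intro z hz hqz
    obtain ⟨w, hw⟩ := hz
    have hfix : p z = z := by
      rw [← hw]
      have := congrArg (fun f : H →L[ℂ] H => f w) hp_idem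
      simpa using this
    have h1 : ‖(p - q) z‖ = ‖z‖ := by
      simp [ContinuousLinearMap.sub_apply, hfix, hqz]
    have h2 : ‖(p - q) z‖ ≤ ‖p - q‖ * ‖z‖ := (p - q).le_opNorm z
    by_contra hz0
    have hzpos : 0 < ‖z‖ := norm_pos_iff.2 hz0
    have : ‖z‖ < ‖z‖ := by
      calc ‖z‖ = ‖(p - q) z‖ := h1.symm
        _ ≤ ‖p - q‖ * ‖z‖ := h2
        _ < 1 * ‖z‖ := by exact mul_lt_mul_of_pos_right hpq hzpos
        _ = ‖z‖ := one_mul _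
    exact lt_irrefl _ this
  have hdiff : ((x : H) - (y : H)) ∈ LinearMap.range (p : H →ₗ[ℂ] H) :=
    sub_mem x.2 y.2
  have : (x : H) - (y : H) = 0 := key _ hdiff (by simp [map_sub, hsub])
  exact Subtype.ext (sub_eq_zero.mp this)

/-- If `p` and `q` are projections (self-adjoint idempotent bounded operators) on a complex
Hilbert space `H` with `‖p − q‖ < 1`, then their ranges are isomorphic as `ℂ`-vector spaces;
in particular they have the same rank. -/
theorem range_iso_of_projections_close
    (H : Type*) [NormedAddCommGroup H] [InnerProductSpace ℂ H] [CompleteSpace H]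
    (p q : H →L[ℂ] H)
    (hp_sa : IsSelfAdjoint p) (hp_idem : p * p = p)
    (hq_sa : IsSelfAdjoint q) (hq_idem : q * q = q)
    (hpq : ‖p - q‖ < 1) :
    Nonempty ((LinearMap.range (p : H →ₗ[ℂ] H)) ≃ₗ[ℂ] (LinearMap.range (q : H →ₗ[ℂ] H))) ∧
      Module.rank ℂ (LinearMap.range (p : H →ₗ[ℂ] H)) =
        Module.rank ℂ (LinearMap.range (q : H →ₗ[ℂ] H)) := by
  have hqp : ‖q - p‖ < 1 := by rwa [norm_sub_rev]
  -- linear maps between the ranges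
  let f : LinearMap.range (p : H →ₗ[ℂ] H) →ₗ[ℂ] LinearMap.range (q : H →ₗ[ℂ] H) :=
    { toFun := fun x => ⟨q x, LinearMap.mem_range.2 ⟨(x : H), rfl⟩⟩
      map_add' := fun x y => by ext; simp
      map_smul' := fun c x => by ext; simp }
  let g : LinearMap.range (q : H →ₗ[ℂ] H) →ₗ[ℂ] LinearMap.range (p : H →ₗ[ℂ] H) :=
    { toFun := fun x => ⟨p x, LinearMap.mem_range.2 ⟨(x : H), rfl⟩⟩
      map_add' := fun x y => by ext; simp
      map_smul' := fun c x => by ext; simp }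
  have hf : Function.Injective f := aux_inj_on_range p q hp_idem hpq
  have hg : Function.Injective g := aux_inj_on_range q p hq_idem hqp
  have h1 := LinearMap.rank_le_of_injective f hf
  have h2 := LinearMap.rank_le_of_injective g hg
  have hrank : Module.rank ℂ (LinearMap.range (p : H →ₗ[ℂ] H)) =
      Module.rank ℂ (LinearMap.range (q : H →ₗ[ℂ] H)) := le_antisymm h1 h2
  exact ⟨nonempty_linearEquiv_of_rank_eq hrank, hrank⟩
end

section
/- Let H be a complex Hilbert space and let p : [0,1] → B(H) be a norm-continuous map such that p(t) is a projection (a self-adjoint idempotent bounded operator) for every t ∈ [0,1]. Then the ranges of p(0) and p(1) are isomorphic as ℂ-vector spaces; in particular, Module.rank ℂ (range (p 0)) = Module.rank ℂ (range (p 1)). -/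
/-- Membership in the range of an idempotent operator is being a fixed point. -/
lemma mem_range_idem {H : Type*} [NormedAddCommGroup H] [InnerProductSpace ℂ H]
    (p : H →L[ℂ] H) (hp : p * p = p) (x : H) :
    x ∈ LinearMap.range (p : H →ₗ[ℂ] H) ↔ p x = x := by
  constructor
  · rintro ⟨y, rfl⟩
    have := congrArg (fun f : H →L[ℂ] H => f y) hp
    simpa using this
  · intro h
    exact ⟨x, h⟩

lemma rank_le_of_close {H : Type*} [NormedAddCommGroup H] [InnerProductSpace ℂ H]
    (p q : H →L[ℂ] H) (hp : p * p = p) (h : ‖p - q‖ < 1) :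
    Module.rank ℂ (LinearMap.range (p : H →ₗ[ℂ] H)) ≤
      Module.rank ℂ (LinearMap.range (q : H →ₗ[ℂ] H)) := by
  have hmap : ∀ x ∈ LinearMap.range (p : H →ₗ[ℂ] H),
      (q : H →ₗ[ℂ] H) x ∈ LinearMap.range (q : H →ₗ[ℂ] H) := fun x _ => ⟨x, rfl⟩
  set f := (q : H →ₗ[ℂ] H).restrict hmap
  have hinj : Function.Injective f := by
    rw [← LinearMap.ker_eq_bot, eq_bot_iff]
    rintro ⟨x, hx⟩ hker
    have hqx : q x = 0 := congrArg Subtype.val hker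
    have hpx : p x = x := (mem_range_idem p hp x).1 hx
    have : ‖x‖ = ‖(p - q) x‖ := by simp [hpx, hqx]
    have hle : ‖x‖ ≤ ‖p - q‖ * ‖x‖ := this ▸ (p - q).le_opNorm x
    have hx0 : x = 0 := by
      by_contra hx0
      have hxpos : 0 < ‖x‖ := norm_pos_iff.2 hx0
      nlinarith
    exact Submodule.mem_bot ℂ |>.2 (Subtype.ext hx0)
  exact LinearMap.rank_le_of_injective f hinj

/-- If `p : [0,1] → B(H)` is a norm-continuous path of projections (self-adjoint idempotent
bounded operators) on a complex Hilbert space `H`, then the ranges of `p 0` and `p 1` are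
isomorphic as `ℂ`-vector spaces; in particular they have the same rank. This is the continuity
of the rank of projections. -/
theorem range_iso_of_projection_path
    (H : Type*) [NormedAddCommGroup H] [InnerProductSpace ℂ H] [CompleteSpace H]
    (p : unitInterval → (H →L[ℂ] H))
    (hp_cont : Continuous p)
    (hp_proj : ∀ t, IsSelfAdjoint (p t) ∧ p t * p t = p t) :
    Nonempty ((LinearMap.range (p 0 : H →ₗ[ℂ] H)) ≃ₗ[ℂ] (LinearMap.range (p 1 : H →ₗ[ℂ] H))) ∧
      Module.rank ℂ (LinearMap.range (p 0 : H →ₗ[ℂ] H)) =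
        Module.rank ℂ (LinearMap.range (p 1 : H →ₗ[ℂ] H)) := by
  set r : unitInterval → Cardinal :=
    fun t => Module.rank ℂ (LinearMap.range (p t : H →ₗ[ℂ] H)) with hr
  have hlc : IsLocallyConstant r := by
    rw [IsLocallyConstant.iff_exists_open]
    intro t
    have hcont : Continuous fun s => ‖p s - p t‖ :=
      (hp_cont.sub continuous_const).norm
    refine ⟨{s | ‖p s - p t‖ < 1}, isOpen_lt hcont continuous_const, by simp, ?_⟩
    intro s hs
    have hs' : ‖p s - p t‖ < 1 := hs
    have hst : ‖p t - p s‖ < 1 := by rwa [norm_sub_rev]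
    exact le_antisymm
      (rank_le_of_close (p s) (p t) (hp_proj s).2 hs')
      (rank_le_of_close (p t) (p s) (hp_proj t).2 hst)
  have heq : r 0 = r 1 := hlc.apply_eq_of_preconnectedSpace 0 1
  exact ⟨nonempty_linearEquiv_of_rank_eq heq, heq⟩
end
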